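/- Let ρ(u) = √(u(4−u))/(2πu) for u ∈ (0,4] (the Marchenko–Pastur density), let L > 0, and define B(κ) = 1 − κ/2 + (κ/4)·log|1−κ| for 0 ≤ κ < 2 (κ ≠ 1) and B(κ) = 0 for κ ≥ 2. Then lim_{t→0⁺} (1/t)·( L − ∫₀⁴ L·ρ(u)·B( t/(2π·ρ(u)·L) ) du ) = 1/π. -/

import Mathlib

/-!
The substitution `u = 4s²/(1+s²)` maps `(0, ∞)` onto `(0, 4)`, turns `ρ(u) du` into
`(4/π)(1+s²)⁻² ds` and the argument of `B` into `a s` with `a = t/L`. Writing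
`B(κ) = 1 - κ/2 - r(κ)`, the exact integrals `∫ (1+s²)⁻² = π/4` and `∫ s (1+s²)⁻² = 1/2` give
`(1/t)(L - ∫ L ρ B) = 1/π + (4/π) a⁻¹ ∫ r(a s) (1+s²)⁻² ds`.
Away from `κ = 1` the remainder is `O(κ²)`, which contributes `O(a²)` to the last integral; near
`κ = 1` it is bounded by the integrable `|log (1-κ)|`, and there `(1+s²)⁻² ≤ 16 a⁴`, so after
rescaling this part is `O(a³)`. Hence the error term is `O(a)`.
-/

open MeasureTheory Real Filter

/-- The Marchenko–Pastur density `ρ(u) = √(u(4−u))/(2πu)` on `(0, 4]`. -/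
noncomputable def rhoMP (u : ℝ) : ℝ :=
  Real.sqrt (u * (4 - u)) / (2 * Real.pi * u)

/-- The GSE two-level form factor `B(κ)`:
`B(κ) = 1 − κ/2 + (κ/4) log|1−κ|` for `0 ≤ κ < 2`, and `B(κ) = 0` for `κ ≥ 2`. -/
noncomputable def Bgse (κ : ℝ) : ℝ :=
  if κ < 2 then 1 - κ / 2 + (κ / 4) * Real.log |1 - κ| else 0

open Set Topology

theorem integrable_pow_mul_inv_one_add_sq_sq {k : ℕ} (hk : k ≤ 2) :
    Integrable fun s : ℝ => s ^ k * ((1 + s ^ 2) ^ 2)⁻¹ := by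
  refine integrable_inv_one_add_sq.mono' (by fun_prop) (.of_forall fun s => ?_)
  have hpow : |s| ^ k ≤ 1 + s ^ 2 := by
    interval_cases k
    · simp [sq_nonneg]
    · nlinarith [abs_nonneg s, sq_abs s]
    · simp [sq_abs]
  rw [norm_mul, norm_pow, Real.norm_eq_abs, norm_inv, norm_pow,
    Real.norm_of_nonneg (by positivity)]
  calc |s| ^ k * ((1 + s ^ 2) ^ 2)⁻¹ ≤ (1 + s ^ 2) * ((1 + s ^ 2) ^ 2)⁻¹ := by gcongr
    _ = (1 + s ^ 2)⁻¹ := by field_simp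

theorem integral_Ioi_inv_one_add_sq_sq : ∫ s in Ioi (0:ℝ), ((1 + s ^ 2) ^ 2)⁻¹ = π / 4 := by
  have hderiv : ∀ s ∈ Ici (0:ℝ), HasDerivAt (fun s => s / (2 * (1 + s ^ 2)) + arctan s / 2)
      ((1 + s ^ 2) ^ 2)⁻¹ s := by
    intro s _
    refine (((hasDerivAt_id' s).div (((hasDerivAt_pow 2 s).const_add 1).const_mul 2)
      (by positivity)).add ((hasDerivAt_arctan s).div_const 2)).congr_deriv ?_
    field_simp
    ring
  have hlim :
      Tendsto (fun s : ℝ => s / (2 * (1 + s ^ 2)) + arctan s / 2) atTop (𝓝 (π / 4)) := by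
    have h1 : Tendsto (fun s : ℝ => s / (2 * (1 + s ^ 2))) atTop (𝓝 0) := by
      refine squeeze_zero' ?_ ?_ tendsto_inv_atTop_zero
      · filter_upwards [eventually_ge_atTop 0] with s hs
        positivity
      · filter_upwards [eventually_gt_atTop 0] with s hs
        rw [div_le_iff₀ (by positivity), inv_mul_eq_div, le_div_iff₀ hs]
        nlinarith
    have h2 := (tendsto_arctan_atTop.mono_right nhdsWithin_le_nhds).div_const 2
    convert h1.add h2 using 2
    ring
  simpa using integral_Ioi_of_hasDerivAt_of_nonneg' hderiv (fun _ _ => by positivity) hlim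

theorem integral_Ioi_mul_inv_one_add_sq_sq :
    ∫ s in Ioi (0:ℝ), s * ((1 + s ^ 2) ^ 2)⁻¹ = 1 / 2 := by
  have hderiv : ∀ s ∈ Ici (0:ℝ), HasDerivAt (fun s => -(2 * (1 + s ^ 2))⁻¹)
      (s * ((1 + s ^ 2) ^ 2)⁻¹) s := by
    intro s _
    refine ((((hasDerivAt_pow 2 s).const_add 1).const_mul 2).inv
      (by positivity)).neg.congr_deriv ?_
    field_simp
    ring
  have hlim : Tendsto (fun s : ℝ => -(2 * (1 + s ^ 2))⁻¹) atTop (𝓝 0) := by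
    have : Tendsto (fun s : ℝ => 2 * (1 + s ^ 2)) atTop atTop :=
      (tendsto_atTop_add_const_left _ _ (tendsto_pow_atTop two_ne_zero)).const_mul_atTop two_pos
    simpa using this.inv_tendsto_atTop.neg
  have := integral_Ioi_of_hasDerivAt_of_nonneg' hderiv (fun s (hs : 0 < s) => by positivity) hlim
  norm_num [this]

theorem image_four_mul_sq_div_one_add_sq_Ioi :
    (fun s : ℝ => 4 * s ^ 2 / (1 + s ^ 2)) '' Ioi 0 = Ioo 0 4 := by
  ext u
  constructor
  · rintro ⟨s, hs : 0 < s, rfl⟩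
    refine ⟨by positivity, ?_⟩
    rw [div_lt_iff₀ (by positivity)]
    linarith
  · rintro ⟨hu0, hu4⟩
    refine ⟨√(u / (4 - u)), Real.sqrt_pos.2 (div_pos hu0 (by linarith)), ?_⟩
    have h4u : 4 - u ≠ 0 := by linarith
    simp only
    rw [Real.sq_sqrt (div_pos hu0 (by linarith)).le]
    field_simp
    ring

theorem strictMonoOn_four_mul_sq_div_one_add_sq :
    StrictMonoOn (fun s : ℝ => 4 * s ^ 2 / (1 + s ^ 2)) (Ioi 0) := by
  intro x (hx : 0 < x) y (hy : 0 < y) hxy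
  simp only
  rw [div_lt_div_iff₀ (by positivity) (by positivity)]
  nlinarith [mul_pos (sub_pos.2 hxy) (add_pos hx hy)]

theorem integral_Ioo_zero_four_eq_integral_Ioi {E : Type*} [NormedAddCommGroup E]
    [NormedSpace ℝ E] (g : ℝ → E) :
    ∫ u in Ioo (0:ℝ) 4, g u =
      ∫ s in Ioi (0:ℝ), (8 * s * ((1 + s ^ 2) ^ 2)⁻¹) • g (4 * s ^ 2 / (1 + s ^ 2)) := by
  have hderiv : ∀ s ∈ Ioi (0:ℝ), HasDerivWithinAt (fun s : ℝ => 4 * s ^ 2 / (1 + s ^ 2))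
      (8 * s * ((1 + s ^ 2) ^ 2)⁻¹) (Ioi 0) s := by
    intro s _
    refine ((((hasDerivAt_pow 2 s).const_mul 4).div ((hasDerivAt_pow 2 s).const_add 1)
      (by positivity)).congr_deriv ?_).hasDerivWithinAt
    field_simp
    ring
  rw [← image_four_mul_sq_div_one_add_sq_Ioi, integral_image_eq_integral_abs_deriv_smul
    measurableSet_Ioi hderiv strictMonoOn_four_mul_sq_div_one_add_sq.injOn]
  refine setIntegral_congr_fun measurableSet_Ioi fun s (hs : 0 < s) => ?_
  rw [abs_of_pos (by positivity)]

theorem rhoMP_four_mul_sq_div_one_add_sq {s : ℝ} (hs : 0 < s) :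
    rhoMP (4 * s ^ 2 / (1 + s ^ 2)) = (2 * π * s)⁻¹ := by
  have hprod : 4 * s ^ 2 / (1 + s ^ 2) * (4 - 4 * s ^ 2 / (1 + s ^ 2)) =
      (4 * s / (1 + s ^ 2)) ^ 2 := by
    field_simp
    ring
  rw [rhoMP, hprod, Real.sqrt_sq (by positivity)]
  field_simp

theorem integral_mul_rhoMP_mul_comp (L t : ℝ) (f : ℝ → ℝ) :
    ∫ u in (0:ℝ)..4, L * rhoMP u * f (t / (2 * π * rhoMP u * L)) =
      4 * L / π * ∫ s in Ioi (0:ℝ), ((1 + s ^ 2) ^ 2)⁻¹ * f (t / L * s) := by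
  rw [intervalIntegral.integral_of_le (by norm_num), integral_Ioc_eq_integral_Ioo,
    integral_Ioo_zero_four_eq_integral_Ioi, ← integral_const_mul]
  refine setIntegral_congr_fun measurableSet_Ioi fun s (hs : 0 < s) => ?_
  have harg : t / (2 * π * (2 * π * s)⁻¹ * L) = t / L * s := by
    rw [show 2 * π * (2 * π * s)⁻¹ = s⁻¹ by field_simp, mul_comm, div_mul_eq_div_div,
      div_inv_eq_mul]
  simp only [smul_eq_mul, rhoMP_four_mul_sq_div_one_add_sq hs, harg]
  field_simp
  ring

noncomputable def gseRemainder (κ : ℝ) : ℝ := 1 - κ / 2 - Bgse κ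

theorem measurable_Bgse : Measurable Bgse :=
  Measurable.ite measurableSet_Iio (by fun_prop) measurable_const

theorem measurable_gseRemainder : Measurable gseRemainder :=
  (measurable_const.sub (measurable_id.div_const 2)).sub measurable_Bgse

theorem gseRemainder_of_lt_two {κ : ℝ} (hκ : κ < 2) :
    gseRemainder κ = -(κ / 4 * log (1 - κ)) := by
  rw [gseRemainder, Bgse, if_pos hκ, log_abs]
  ring

theorem gseRemainder_of_two_le {κ : ℝ} (hκ : 2 ≤ κ) : gseRemainder κ = 1 - κ / 2 := by
  rw [gseRemainder, Bgse, if_neg (not_lt.2 hκ), sub_zero]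

theorem abs_gseRemainder_le_sq_of_le_half {κ : ℝ} (h0 : 0 ≤ κ) (hκ : κ ≤ 1 / 2) :
    |gseRemainder κ| ≤ κ ^ 2 := by
  have hpos : 0 < 1 - κ := by linarith
  have hlog : -log (1 - κ) ≤ κ / (1 - κ) := by
    have := one_sub_inv_le_log_of_pos hpos
    rw [show κ / (1 - κ) = (1 - κ)⁻¹ - 1 by field_simp; ring]
    linarith
  have hfrac : κ / (1 - κ) ≤ 2 * κ := by
    rw [div_le_iff₀ hpos]
    nlinarith
  rw [gseRemainder_of_lt_two (by linarith), abs_neg, abs_mul, abs_of_nonneg (by positivity),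
    abs_of_nonpos (log_nonpos hpos.le (by linarith))]
  nlinarith

noncomputable def gseLogSingularity : ℝ → ℝ :=
  (Ioo (1 / 2 : ℝ) 2).indicator fun κ => |log (1 - κ)|

theorem gseLogSingularity_nonneg (κ : ℝ) : 0 ≤ gseLogSingularity κ :=
  indicator_nonneg (fun _ _ => abs_nonneg _) κ

theorem integrable_gseLogSingularity : Integrable gseLogSingularity := by
  have hlog : IntervalIntegrable (fun κ => log (1 - κ)) volume (1 / 2) 2 := by
    convert (intervalIntegral.intervalIntegrable_log' (a := 1 / 2) (b := -1)).comp_sub_left 1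
      using 1 <;> norm_num
  exact ((intervalIntegrable_iff_integrableOn_Ioo_of_le (by norm_num)).1
    hlog.abs).integrable_indicator measurableSet_Ioo

theorem abs_gseRemainder_le (κ : ℝ) (h0 : 0 ≤ κ) :
    |gseRemainder κ| ≤ κ ^ 2 + gseLogSingularity κ := by
  rcases le_or_gt κ (1 / 2) with hsmall | hmid
  · exact (abs_gseRemainder_le_sq_of_le_half h0 hsmall).trans
      (le_add_of_nonneg_right (gseLogSingularity_nonneg κ))
  rcases lt_or_ge κ 2 with hmid' | hlarge
  · rw [gseLogSingularity, indicator_of_mem (show κ ∈ Ioo (1 / 2 : ℝ) 2 from ⟨hmid, hmid'⟩),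
      gseRemainder_of_lt_two hmid', abs_neg, abs_mul, abs_of_pos (by linarith)]
    nlinarith [abs_nonneg (log (1 - κ))]
  · rw [gseRemainder_of_two_le hlarge, abs_of_nonpos (by linarith)]
    nlinarith [gseLogSingularity_nonneg κ]

theorem gseLogSingularity_mul_inv_one_add_sq_sq_le {a s : ℝ} (ha : 0 < a) :
    gseLogSingularity (a * s) * ((1 + s ^ 2) ^ 2)⁻¹ ≤
      16 * a ^ 4 * gseLogSingularity (a * s) := by
  by_cases hmem : a * s ∈ Ioo (1 / 2 : ℝ) 2
  · rw [mul_comm (16 * a ^ 4)]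
    refine mul_le_mul_of_nonneg_left ?_ (gseLogSingularity_nonneg _)
    rw [inv_le_iff_one_le_mul₀ (by positivity)]
    have has : (1 / 2) ^ 4 < (a * s) ^ 4 := pow_lt_pow_left₀ hmem.1 (by norm_num) four_ne_zero
    have hs4 : s ^ 4 ≤ (1 + s ^ 2) ^ 2 := by nlinarith [sq_nonneg s]
    calc (1 : ℝ) ≤ 16 * (a * s) ^ 4 := by linarith
      _ = 16 * a ^ 4 * s ^ 4 := by ring
      _ ≤ 16 * a ^ 4 * (1 + s ^ 2) ^ 2 := by gcongr
      _ = _ := by ring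
  · rw [gseLogSingularity, indicator_of_notMem hmem]
    simp

theorem norm_gseRemainder_mul_le {a s : ℝ} (ha : 0 < a) (hs : 0 < s) :
    ‖gseRemainder (a * s) * ((1 + s ^ 2) ^ 2)⁻¹‖ ≤
      a ^ 2 * (s ^ 2 * ((1 + s ^ 2) ^ 2)⁻¹) + 16 * a ^ 4 * gseLogSingularity (a * s) := by
  rw [norm_mul, Real.norm_eq_abs, norm_inv, Real.norm_of_nonneg (by positivity)]
  calc |gseRemainder (a * s)| * ((1 + s ^ 2) ^ 2)⁻¹
      ≤ ((a * s) ^ 2 + gseLogSingularity (a * s)) * ((1 + s ^ 2) ^ 2)⁻¹ := by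
        gcongr
        exact abs_gseRemainder_le _ (by positivity)
    _ ≤ _ := by
      rw [add_mul, mul_pow, mul_assoc]
      exact add_le_add le_rfl (gseLogSingularity_mul_inv_one_add_sq_sq_le ha)

section Majorant

variable {a : ℝ}

theorem integrableOn_Ioi_gseLogSingularity_comp_mul (ha : 0 < a) :
    IntegrableOn (fun s => gseLogSingularity (a * s)) (Ioi 0) := by
  rw [integrableOn_Ioi_comp_mul_left_iff _ _ ha]
  exact integrable_gseLogSingularity.integrableOn

theorem integrableOn_gseRemainder_majorant (ha : 0 < a) :
    IntegrableOn (fun s => a ^ 2 * (s ^ 2 * ((1 + s ^ 2) ^ 2)⁻¹) +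
      16 * a ^ 4 * gseLogSingularity (a * s)) (Ioi 0) :=
  ((integrable_pow_mul_inv_one_add_sq_sq le_rfl).integrableOn.const_mul _).add
    ((integrableOn_Ioi_gseLogSingularity_comp_mul ha).const_mul _)

theorem integrableOn_gseRemainder_mul (ha : 0 < a) :
    IntegrableOn (fun s => gseRemainder (a * s) * ((1 + s ^ 2) ^ 2)⁻¹) (Ioi 0) :=
  (integrableOn_gseRemainder_majorant ha).mono'
    ((measurable_gseRemainder.comp (measurable_const_mul a)).mul
      (by fun_prop)).aestronglyMeasurable
    ((ae_restrict_iff' measurableSet_Ioi).2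
      (.of_forall fun _ hs => norm_gseRemainder_mul_le ha hs))

theorem norm_integral_gseRemainder_mul_le (ha : 0 < a) :
    ‖∫ s in Ioi 0, gseRemainder (a * s) * ((1 + s ^ 2) ^ 2)⁻¹‖ ≤
      a ^ 2 * (∫ s in Ioi 0, s ^ 2 * ((1 + s ^ 2) ^ 2)⁻¹) +
        16 * a ^ 3 * ∫ κ in Ioi 0, gseLogSingularity κ := by
  refine (norm_integral_le_of_norm_le (integrableOn_gseRemainder_majorant ha)
    ((ae_restrict_iff' measurableSet_Ioi).2
      (.of_forall fun _ hs => norm_gseRemainder_mul_le ha hs))).trans_eq ?_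
  rw [integral_add ((integrable_pow_mul_inv_one_add_sq_sq le_rfl).integrableOn.const_mul _)
    ((integrableOn_Ioi_gseLogSingularity_comp_mul ha).const_mul _), integral_const_mul,
    integral_const_mul, integral_comp_mul_left_Ioi _ _ ha, mul_zero, smul_eq_mul]
  field_simp

end Majorant

theorem tendsto_inv_mul_integral_gseRemainder_mul :
    Tendsto (fun a => a⁻¹ * ∫ s in Ioi 0, gseRemainder (a * s) * ((1 + s ^ 2) ^ 2)⁻¹)
      (𝓝[>] 0) (𝓝 0) := by
  set C₁ := ∫ s in Ioi (0:ℝ), s ^ 2 * ((1 + s ^ 2) ^ 2)⁻¹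
  set C₂ := ∫ κ in Ioi (0:ℝ), gseLogSingularity κ
  have hmajorant : Tendsto (fun a : ℝ => a * C₁ + 16 * a ^ 2 * C₂) (𝓝[>] 0) (𝓝 0) := by
    have hcont : Continuous fun a : ℝ => a * C₁ + 16 * a ^ 2 * C₂ := by fun_prop
    simpa using (hcont.tendsto 0).mono_left nhdsWithin_le_nhds
  refine squeeze_zero_norm' ?_ hmajorant
  filter_upwards [self_mem_nhdsWithin] with a (ha : 0 < a)
  rw [norm_mul, norm_inv, Real.norm_of_nonneg ha.le]
  calc a⁻¹ * ‖∫ s in Ioi 0, gseRemainder (a * s) * ((1 + s ^ 2) ^ 2)⁻¹‖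
      ≤ a⁻¹ * (a ^ 2 * C₁ + 16 * a ^ 3 * C₂) := by
        gcongr
        exact norm_integral_gseRemainder_mul_le ha
    _ = a * C₁ + 16 * a ^ 2 * C₂ := by
        field_simp

theorem integral_Ioi_inv_one_add_sq_sq_mul_Bgse {a : ℝ} (ha : 0 < a) :
    ∫ s in Ioi (0:ℝ), ((1 + s ^ 2) ^ 2)⁻¹ * Bgse (a * s) =
      π / 4 - a / 4 - ∫ s in Ioi 0, gseRemainder (a * s) * ((1 + s ^ 2) ^ 2)⁻¹ := by
  have hw : IntegrableOn (fun s : ℝ => ((1 + s ^ 2) ^ 2)⁻¹) (Ioi 0) := by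
    simpa using (integrable_pow_mul_inv_one_add_sq_sq (k := 0) (by norm_num)).integrableOn
  have hsw : IntegrableOn (fun s : ℝ => a / 2 * (s * ((1 + s ^ 2) ^ 2)⁻¹)) (Ioi 0) := by
    simpa using ((integrable_pow_mul_inv_one_add_sq_sq (k := 1) (by norm_num)).const_mul
      (a / 2)).integrableOn
  have hexpand : ∀ s, ((1 + s ^ 2) ^ 2)⁻¹ * Bgse (a * s) = ((1 + s ^ 2) ^ 2)⁻¹ -
      a / 2 * (s * ((1 + s ^ 2) ^ 2)⁻¹) - gseRemainder (a * s) * ((1 + s ^ 2) ^ 2)⁻¹ := by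
    intro s
    rw [gseRemainder]
    ring
  simp_rw [hexpand]
  rw [integral_sub ?_ (integrableOn_gseRemainder_mul ha), integral_sub hw hsw,
    integral_const_mul, integral_Ioi_inv_one_add_sq_sq, integral_Ioi_mul_inv_one_add_sq_sq]
  · ring
  · exact hw.sub hsw

theorem one_div_mul_sub_integral_eq {L t : ℝ} (hL : 0 < L) (ht : 0 < t) :
    1 / t * (L - ∫ u in (0:ℝ)..4, L * rhoMP u * Bgse (t / (2 * π * rhoMP u * L))) =
      1 / π + 4 / π *
        ((t / L)⁻¹ * ∫ s in Ioi 0, gseRemainder (t / L * s) * ((1 + s ^ 2) ^ 2)⁻¹) := by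
  rw [integral_mul_rhoMP_mul_comp, integral_Ioi_inv_one_add_sq_sq_mul_Bgse (div_pos ht hL)]
  field_simp
  ring

/-- Early-time slope of the refined connected two-point form factor of the LSE:
`lim_{t→0⁺} (1/t)(L − ∫₀⁴ Lρ(u) B(t/(2πρ(u)L)) du) = 1/π`. -/
theorem lse_refined_form_factor_slope (L : ℝ) (hL : 0 < L) :
    Tendsto (fun t : ℝ =>
        (1 / t) * (L - ∫ u in (0:ℝ)..4, L * rhoMP u * Bgse (t / (2 * Real.pi * rhoMP u * L))))
      (nhdsWithin 0 (Set.Ioi 0)) (nhds (1 / Real.pi)) := by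
  have hscale : Tendsto (fun t => t / L) (𝓝[>] 0) (𝓝[>] 0) :=
    tendsto_nhdsWithin_iff.2
      ⟨((continuous_id.div_const L).tendsto' 0 0 (zero_div L)).mono_left nhdsWithin_le_nhds,
        eventually_nhdsWithin_of_forall fun t (ht : 0 < t) => div_pos ht hL⟩
  have hlim := ((tendsto_inv_mul_integral_gseRemainder_mul.comp hscale).const_mul
    (4 / π)).const_add (1 / π)
  rw [mul_zero, add_zero] at hlim
  refine hlim.congr' ?_
  filter_upwards [self_mem_nhdsWithin] with t (ht : 0 < t)
  exact (one_div_mul_sub_integral_eq hL ht).symm
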